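/- arXiv:2109.14510 — 5 statements merged into one kernel-verified Lean document; each statement's English description precedes it below -/
import Mathlib

section
/- For the RCD update on a complete graph, starting from any feasible x, the expected squared distance to the constrained minimizer contracts: E[‖x⁺ − x*‖²] ≤ (1 − hα/(n−1))·‖x − x*‖², where x⁺ = x − h Q^{ij} ∇f(x) with the edge (i,j) chosen uniformly at random among the n(n−1)/2 edges, for any step size 0 < h ≤ 1/β. -/
open Matrix Finset

/-!
At the constrained minimiser all derivatives `g k' (x* k)` coincide (Lagrange condition), so with
`s = x - x*` and `D k = g k' (x k) - g k' (x* k)` the step along the edge `(i, j)` moves `s` by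
`-h (D i - D j) / 2 • (e i - e j)`, and
`‖x⁺ - x*‖² = ‖s‖² - h (D i - D j) (s i - s j) + h² (D i - D j)² / 2`.
Averaging over the edges and using `∑ s = 0`, the first-order term becomes `-(2h/(n-1)) ⟪D, s⟫`
and the second-order one is at most `(h²/(n-1)) ‖D‖²`. Strong convexity gives
`⟪D, s⟫ ≥ α ‖s‖²`, and the Lipschitz derivatives give `D k² ≤ β D k s k`, hence
`h ‖D‖² ≤ ⟪D, s⟫` when `h β ≤ 1`.
-/

theorem sum_sum_sub_mul_sub {ι R : Type*} [Fintype ι] [CommRing R] (a b : ι → R) :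
    ∑ i, ∑ j, (a i - a j) * (b i - b j)
      = 2 * (Fintype.card ι * ∑ k, a k * b k - (∑ k, a k) * ∑ k, b k) := by
  simp only [sub_mul, mul_sub, sum_sub_distrib, sum_const, card_univ, nsmul_eq_mul,
    ← mul_sum, ← sum_mul]
  ring

section Pairs

variable {ι : Type*} [Fintype ι] [LinearOrder ι]

theorem two_mul_sum_pairs_lt {R : Type*} [Semiring R] (F : ι → ι → R)
    (hdiag : ∀ i, F i i = 0) (hsymm : ∀ i j, F i j = F j i) :
    2 * ∑ p ∈ univ.filter (fun p : ι × ι => p.1 < p.2), F p.1 p.2 = ∑ i, ∑ j, F i j := by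
  have hsplit : ∀ i j, F i j = (if i < j then F i j else 0) + (if j < i then F j i else 0) := by
    intro i j
    rcases lt_trichotomy i j with hij | rfl | hij
    · simp [hij, hij.not_gt]
    · simp [hdiag]
    · simp [hij, hij.not_gt, hsymm i j]
  rw [two_mul, sum_filter, Fintype.sum_prod_type]
  nth_rw 2 [sum_comm]
  simp_rw [← sum_add_distrib, ← hsplit]

theorem two_mul_card_pairs_lt :
    2 * (#(univ.filter fun p : ι × ι => p.1 < p.2) : ℝ)
      = Fintype.card ι * (Fintype.card ι - 1) := by
  rw [Fintype.card_product_filter_lt, Nat.cast_choose_two]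
  ring

end Pairs

theorem sq_le_mul_mul_of_abs_le {a c β : ℝ} (hac : 0 ≤ a * c) (h : |a| ≤ β * |c|) :
    a ^ 2 ≤ β * (a * c) :=
  calc a ^ 2 = |a| * |a| := by rw [abs_mul_abs_self, sq]
    _ ≤ |a| * (β * |c|) := mul_le_mul_of_nonneg_left h (abs_nonneg a)
    _ = β * (a * c) := by rw [mul_left_comm, ← abs_mul, abs_of_nonneg hac]

section Average

variable {ι : Type*} [Fintype ι] [LinearOrder ι]

theorem two_mul_sum_pairs_sq_dist (s D : ι → ℝ) (hs : ∑ k, s k = 0) (h : ℝ) :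
    2 * ∑ p ∈ univ.filter (fun p : ι × ι => p.1 < p.2),
        (∑ k, s k ^ 2 - h * (D p.1 - D p.2) * (s p.1 - s p.2) + h ^ 2 * (D p.1 - D p.2) ^ 2 / 2)
      = Fintype.card ι * (Fintype.card ι - 1) * ∑ k, s k ^ 2
        - 2 * h * Fintype.card ι * ∑ k, D k * s k
        + h ^ 2 * (Fintype.card ι * ∑ k, D k * D k - (∑ k, D k) * ∑ k, D k) := by
  set F : ι → ι → ℝ := fun i j =>
    -h * ((D i - D j) * (s i - s j)) + h ^ 2 / 2 * ((D i - D j) * (D i - D j))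
  have hF := two_mul_sum_pairs_lt F (fun i => by simp [F]) (fun i j => by simp only [F]; ring)
  have hterm : ∀ p : ι × ι, ∑ k, s k ^ 2 - h * (D p.1 - D p.2) * (s p.1 - s p.2)
      + h ^ 2 * (D p.1 - D p.2) ^ 2 / 2 = ∑ k, s k ^ 2 + F p.1 p.2 := fun p => by
    simp only [F]; ring
  have hFF : ∑ i, ∑ j, F i j = -h * (2 * (Fintype.card ι * ∑ k, D k * s k))
      + h ^ 2 / 2 * (2 * (Fintype.card ι * ∑ k, D k * D k - (∑ k, D k) * ∑ k, D k)) := by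
    simp only [F, sum_add_distrib, ← mul_sum, sum_sum_sub_mul_sub, hs, mul_zero, sub_zero]
  simp only [hterm, sum_add_distrib, sum_const, nsmul_eq_mul]
  linear_combination (∑ k, s k ^ 2) * two_mul_card_pairs_lt (ι := ι) + hF + hFF

theorem two_div_mul_sum_pairs_sq_dist_le (hcard : 2 ≤ Fintype.card ι) {α β h : ℝ}
    (hα : 0 ≤ α) (hh : 0 ≤ h) (hhβ : h * β ≤ 1) (s D : ι → ℝ) (hs : ∑ k, s k = 0)
    (hstrong : ∀ k, α * s k ^ 2 ≤ D k * s k) (hlip : ∀ k, |D k| ≤ β * |s k|) :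
    2 / (Fintype.card ι * (Fintype.card ι - 1)) *
      ∑ p ∈ univ.filter (fun p : ι × ι => p.1 < p.2),
        (∑ k, s k ^ 2 - h * (D p.1 - D p.2) * (s p.1 - s p.2) + h ^ 2 * (D p.1 - D p.2) ^ 2 / 2)
      ≤ (1 - h * α / (Fintype.card ι - 1)) * ∑ k, s k ^ 2 := by
  have hn : (2:ℝ) ≤ Fintype.card ι := by exact_mod_cast hcard
  have hnh : 0 ≤ h * Fintype.card ι := by positivity
  have hS : 0 ≤ ∑ k, s k ^ 2 := sum_nonneg fun k _ => sq_nonneg _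
  have hDs : α * ∑ k, s k ^ 2 ≤ ∑ k, D k * s k := by
    rw [mul_sum]; exact sum_le_sum fun k _ => hstrong k
  have hDD : ∑ k, D k * D k ≤ β * ∑ k, D k * s k := by
    rw [mul_sum]
    refine sum_le_sum fun k _ => ?_
    have hDs_k : 0 ≤ D k * s k := (mul_nonneg hα (sq_nonneg _)).trans (hstrong k)
    simpa only [sq] using sq_le_mul_mul_of_abs_le hDs_k (hlip k)
  have hsecond : h * ∑ k, D k * D k ≤ ∑ k, D k * s k := by
    have hDs0 : 0 ≤ ∑ k, D k * s k := (mul_nonneg hα hS).trans hDs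
    nlinarith [mul_le_mul_of_nonneg_left hDD hh]
  have hrhs : (1 - h * α / (Fintype.card ι - 1)) * (∑ k, s k ^ 2)
        * (Fintype.card ι * (Fintype.card ι - 1))
      = Fintype.card ι * (Fintype.card ι - 1) * ∑ k, s k ^ 2
        - h * Fintype.card ι * (α * ∑ k, s k ^ 2) := by
    have : (Fintype.card ι : ℝ) - 1 ≠ 0 := by linarith
    field_simp
  rw [div_mul_eq_mul_div, div_le_iff₀ (by nlinarith), two_mul_sum_pairs_sq_dist s D hs h, hrhs]
  nlinarith [mul_le_mul_of_nonneg_left hsecond hnh, mul_le_mul_of_nonneg_left hDs hnh,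
    sq_nonneg (h * ∑ k, D k)]

end Average

section Edge

variable {ι : Type*} [Fintype ι] [DecidableEq ι]

noncomputable def edgeMatrix (i j : ι) : Matrix ι ι ℝ := fun k l =>
  if (k = i ∧ l = i) ∨ (k = j ∧ l = j) then (1:ℝ)/2
  else if (k = i ∧ l = j) ∨ (k = j ∧ l = i) then -(1/2) else 0

def edgeVec (i j : ι) : ι → ℝ := Pi.single i 1 - Pi.single j 1

theorem sum_mul_edgeVec (a : ι → ℝ) (i j : ι) : ∑ k, a k * edgeVec i j k = a i - a j := by
  simp [edgeVec, mul_sub, sum_sub_distrib, Pi.single_apply]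

omit [Fintype ι] in
theorem edgeMatrix_apply {i j : ι} (hij : i ≠ j) (k l : ι) :
    edgeMatrix i j k l = edgeVec i j k * edgeVec i j l / 2 := by
  simp only [edgeMatrix, edgeVec, Pi.sub_apply, Pi.single_apply]
  split_ifs <;> simp_all <;> norm_num

theorem edgeMatrix_mulVec {i j : ι} (hij : i ≠ j) (v : ι → ℝ) :
    edgeMatrix i j *ᵥ v = ((v i - v j) / 2) • edgeVec i j := by
  ext k
  have hrow : ∀ l, edgeMatrix i j k l * v l = edgeVec i j k / 2 * (v l * edgeVec i j l) := by
    intro l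
    rw [edgeMatrix_apply hij]
    ring
  simp only [mulVec, dotProduct, hrow, ← mul_sum, sum_mul_edgeVec, Pi.smul_apply, smul_eq_mul]
  ring

theorem sum_sq_sub_mul_edgeVec (s : ι → ℝ) {i j : ι} (hij : i ≠ j) (c : ℝ) :
    ∑ k, (s k - c * edgeVec i j k) ^ 2 = ∑ k, s k ^ 2 - 2 * c * (s i - s j) + 2 * c ^ 2 := by
  have hexpand : ∀ k, (s k - c * edgeVec i j k) ^ 2
      = s k ^ 2 - 2 * c * (s k * edgeVec i j k) + c ^ 2 * (edgeVec i j k * edgeVec i j k) := by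
    intro k
    ring
  simp only [hexpand, sum_add_distrib, sum_sub_distrib, ← mul_sum, sum_mul_edgeVec]
  simp only [edgeVec, Pi.sub_apply, Pi.single_eq_same, Pi.single_eq_of_ne hij,
    Pi.single_eq_of_ne hij.symm]
  ring

theorem sum_sq_sub_edgeMatrix_mulVec (s v : ι → ℝ) {i j : ι} (hij : i ≠ j) (h : ℝ) :
    ∑ k, (s k - h * (edgeMatrix i j *ᵥ v) k) ^ 2
      = ∑ k, s k ^ 2 - h * (v i - v j) * (s i - s j) + h ^ 2 * (v i - v j) ^ 2 / 2 := by
  have hstep : ∀ k, h * (edgeMatrix i j *ᵥ v) k = h * ((v i - v j) / 2) * edgeVec i j k := by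
    intro k
    simp [edgeMatrix_mulVec hij, mul_assoc]
  simp only [hstep, sum_sq_sub_mul_edgeVec s hij]
  ring

theorem deriv_eq_deriv_of_isMinOn_sum {g : ι → ℝ → ℝ} {xstar : ι → ℝ}
    (hdiff : ∀ i, DifferentiableAt ℝ (g i) (xstar i))
    (hmin : IsMinOn (fun y => ∑ i, g i (y i)) {y | ∑ i, y i = ∑ i, xstar i} xstar) (i j : ι) :
    deriv (g i) (xstar i) = deriv (g j) (xstar j) := by
  have hfeas : ∀ t : ℝ, ∑ k, (xstar k + t * edgeVec i j k) = ∑ k, xstar k := by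
    intro t
    have hzero : ∑ k, edgeVec i j k = 0 := by simpa using sum_mul_edgeVec (fun _ => 1) i j
    rw [sum_add_distrib, ← mul_sum, hzero, mul_zero, add_zero]
  have hloc : IsLocalMin (fun t : ℝ => ∑ k, g k (xstar k + t * edgeVec i j k)) 0 :=
    Filter.Eventually.of_forall fun t => by simpa using hmin (hfeas t)
  have hderiv : HasDerivAt (fun t : ℝ => ∑ k, g k (xstar k + t * edgeVec i j k))
      (∑ k, deriv (g k) (xstar k) * edgeVec i j k) 0 := by
    refine HasDerivAt.fun_sum fun k _ => ?_
    have hline : HasDerivAt (fun t : ℝ => xstar k + t * edgeVec i j k) (edgeVec i j k) 0 := by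
      simpa using ((hasDerivAt_id (0:ℝ)).mul_const (edgeVec i j k)).const_add (xstar k)
    exact (hdiff k).hasDerivAt.comp_of_eq 0 hline (by simp)
  have := hloc.hasDerivAt_eq_zero hderiv
  rw [sum_mul_edgeVec] at this
  linarith

end Edge

theorem mul_sq_le_deriv_sub_mul_sub {f : ℝ → ℝ} {α : ℝ} (hf : ∀ x, DifferentiableAt ℝ f x)
    (hconv : ConvexOn ℝ Set.univ fun x => f x - α / 2 * x ^ 2) (x y : ℝ) :
    α * (x - y) ^ 2 ≤ (deriv f x - deriv f y) * (x - y) := by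
  have hφ (z : ℝ) : HasDerivAt (fun x => f x - α / 2 * x ^ 2) (deriv f z - α * z) z :=
    ((hf z).hasDerivAt.sub ((hasDerivAt_pow 2 z).const_mul (α / 2))).congr_deriv
      (by simp only [Nat.cast_ofNat, Nat.add_one_sub_one, pow_one]; ring)
  have hmono : MonotoneOn (fun z => deriv f z - α * z) Set.univ := by
    have := hconv.monotoneOn_deriv fun z _ => (hφ z).differentiableAt
    rwa [funext fun z => (hφ z).deriv] at this
  have key : 0 ≤ ((deriv f x - α * x) - (deriv f y - α * y)) * (x - y) := by
    rcases le_total y x with hyx | hxy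
    · exact mul_nonneg (sub_nonneg.2 (hmono trivial trivial hyx)) (sub_nonneg.2 hyx)
    · exact mul_nonneg_of_nonpos_of_nonpos (sub_nonpos.2 (hmono trivial trivial hxy))
        (sub_nonpos.2 hxy)
  linear_combination key

/-- Expected contraction of the RCD step on a complete graph: for any feasible `x`,
averaging `‖x⁺ − x*‖²` over a uniformly chosen edge yields a contraction with rate
`1 − hα/(n−1)` for any step size `0 < h ≤ 1/β`. -/
theorem rcd_expected_contraction (n : ℕ) (hn : 2 ≤ n) (α β h b : ℝ)
    (hα : 0 < α) (hαβ : α ≤ β) (hh : 0 < h) (hhβ : h ≤ 1 / β)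
    (g : Fin n → ℝ → ℝ)
    (hdiff : ∀ i x, DifferentiableAt ℝ (g i) x)
    (hconv : ∀ i, ConvexOn ℝ Set.univ (fun x => g i x - α / 2 * x ^ 2))
    (hsmooth : ∀ i x y, |deriv (g i) x - deriv (g i) y| ≤ β * |x - y|)
    (Q : Fin n → Fin n → Matrix (Fin n) (Fin n) ℝ)
    (hQ : ∀ i j, Q i j = fun k l =>
      if (k = i ∧ l = i) ∨ (k = j ∧ l = j) then (1:ℝ)/2
      else if (k = i ∧ l = j) ∨ (k = j ∧ l = i) then -(1/2) else 0)
    (xstar : Fin n → ℝ)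
    (hfeas : ∑ i, xstar i = b)
    (hmin : ∀ y : Fin n → ℝ, ∑ i, y i = b →
      ∑ i, g i (xstar i) ≤ ∑ i, g i (y i))
    (x : Fin n → ℝ) (hx : ∑ i, x i = b) :
    2 / (n * (n - 1) : ℝ) *
      ∑ p ∈ Finset.univ.filter (fun p : Fin n × Fin n => p.1 < p.2),
        ∑ k, (x k - h * (Q p.1 p.2).mulVec (fun i => deriv (g i) (x i)) k - xstar k) ^ 2
      ≤ (1 - h * α / (n - 1)) * ∑ k, (x k - xstar k) ^ 2 := by
  have hβ : 0 < β := hα.trans_le hαβ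
  have hhβ' : h * β ≤ 1 := by rwa [le_div_iff₀ hβ] at hhβ
  set v : Fin n → ℝ := fun k => deriv (g k) (x k)
  set s : Fin n → ℝ := fun k => x k - xstar k
  set D : Fin n → ℝ := fun k => deriv (g k) (x k) - deriv (g k) (xstar k)
  have hs : ∑ k, s k = 0 := by simp only [s, sum_sub_distrib, hx, hfeas, sub_self]
  have hlagrange := deriv_eq_deriv_of_isMinOn_sum (fun i => hdiff i (xstar i))
    (isMinOn_iff.2 fun y hy => hmin y (hfeas ▸ hy))
  have hpair : ∀ p ∈ univ.filter (fun p : Fin n × Fin n => p.1 < p.2),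
      ∑ k, (x k - h * (Q p.1 p.2 *ᵥ v) k - xstar k) ^ 2
        = ∑ k, s k ^ 2 - h * (D p.1 - D p.2) * (s p.1 - s p.2)
          + h ^ 2 * (D p.1 - D p.2) ^ 2 / 2 := by
    intro p hp
    have hvD : v p.1 - v p.2 = D p.1 - D p.2 := by simp only [v, D, hlagrange p.1 p.2]; ring
    have hQp : Q p.1 p.2 = edgeMatrix p.1 p.2 := hQ p.1 p.2
    simp only [sub_right_comm (x _), hQp]
    rw [sum_sq_sub_edgeMatrix_mulVec s v (mem_filter.1 hp).2.ne, hvD]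
  rw [sum_congr rfl hpair]
  simpa using two_div_mul_sum_pairs_sq_dist_le (by simpa using hn) hα.le hh.le hhβ' s D hs
    (fun k => mul_sq_le_deriv_sub_mul_sub (hdiff k) (hconv k) (x k) (xstar k))
    (fun k => hsmooth k (x k) (xstar k))
end

section
/- The constrained minimizer lies in a ball of explicit radius: argmin_{x∈S_b} f(x) ∈ B(0, R) with R = √n + (1 + |b|/n)·√(κn), where κ = β/α. -/
/-!
Around its minimizer `mᵢ`, each `g i` lies between `α/2 (t - mᵢ)²` (strong convexity) and
`β/2 (t - mᵢ)²` (Lipschitz derivative). Comparing `xstar` with the feasible point `m + c 𝟙`,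
`c = (b - ∑ mᵢ)/n`, gives `α ‖xstar - m‖² ≤ β n c²`. As `‖m‖ ≤ √n` and `|c| ≤ 1 + |b|/n`, the
triangle inequality `‖xstar‖ ≤ ‖m‖ + ‖xstar - m‖` gives the radius.
-/

open Finset Set

lemma ConvexOn.add_mul_sub_le_of_hasDerivAt {S : Set ℝ} {f : ℝ → ℝ} {f' x y : ℝ}
    (hf : ConvexOn ℝ S f) (hx : x ∈ S) (hy : y ∈ S) (hf' : HasDerivAt f f' x) :
    f x + f' * (y - x) ≤ f y := by
  rcases lt_trichotomy x y with hxy | rfl | hyx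
  · have h := hf.le_slope_of_hasDerivAt hx hy hxy hf'
    rw [slope_def_field, le_div_iff₀ (sub_pos.mpr hxy)] at h
    linarith
  · simp
  · have h := hf.slope_le_of_hasDerivAt hy hx hyx hf'
    rw [slope_def_field, div_le_iff₀ (sub_pos.mpr hyx)] at h
    linarith

lemma add_mul_sub_add_sq_le_of_convexOn_sub_sq {f : ℝ → ℝ} {a f' x : ℝ}
    (hconv : ConvexOn ℝ univ (fun t => f t - a / 2 * t ^ 2)) (hf' : HasDerivAt f f' x) (y : ℝ) :
    f x + f' * (y - x) + a / 2 * (y - x) ^ 2 ≤ f y := by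
  have hq : HasDerivAt (fun t => f t - a / 2 * t ^ 2) (f' - a * x) x :=
    (hf'.sub ((hasDerivAt_pow 2 x).const_mul (a / 2))).congr_deriv (by ring)
  have h := hconv.add_mul_sub_le_of_hasDerivAt (mem_univ x) (mem_univ y) hq
  linarith

lemma le_add_mul_sub_add_sq_of_abs_deriv_sub_le {f : ℝ → ℝ} {L : ℝ} (hf : Differentiable ℝ f)
    (hL : ∀ x y, |deriv f x - deriv f y| ≤ L * |x - y|) (x y : ℝ) :
    f y ≤ f x + deriv f x * (y - x) + L / 2 * (y - x) ^ 2 := by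
  set q : ℝ → ℝ := fun t => L / 2 * t ^ 2 - f t
  have hq (t) : HasDerivAt q (L * t - deriv f t) t :=
    (((hasDerivAt_pow 2 t).const_mul (L / 2)).sub (hf t).hasDerivAt).congr_deriv (by ring)
  have hq_mono : Monotone (deriv q) := fun s t hst => by
    rw [(hq s).deriv, (hq t).deriv]
    have := (abs_le.mp (hL t s)).2
    rw [abs_of_nonneg (sub_nonneg.mpr hst)] at this
    linarith
  have hq_conv : ConvexOn ℝ univ q :=
    hq_mono.convexOn_univ_of_deriv fun t => (hq t).differentiableAt
  have h := hq_conv.add_mul_sub_le_of_hasDerivAt (mem_univ x) (mem_univ y) (hq x)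
  simp only [q] at h
  linarith

lemma sum_sq_sub_le_of_forall_sum_le {ι : Type*} [Fintype ι] [Nonempty ι]
    {g : ι → ℝ → ℝ} {m x : ι → ℝ} {α β b : ℝ} (hα : 0 < α)
    (hlow : ∀ i t, α / 2 * (t - m i) ^ 2 ≤ g i t) (hupp : ∀ i t, g i t ≤ β / 2 * (t - m i) ^ 2)
    (hmin : ∀ y : ι → ℝ, ∑ i, y i = b → ∑ i, g i (x i) ≤ ∑ i, g i (y i)) :
    ∑ i, (x i - m i) ^ 2 ≤ β / α * Fintype.card ι * ((b - ∑ i, m i) / Fintype.card ι) ^ 2 := by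
  have hN : (Fintype.card ι : ℝ) ≠ 0 := Nat.cast_ne_zero.mpr Fintype.card_ne_zero
  set N : ℝ := ((Fintype.card ι : ℕ) : ℝ)
  set c := (b - ∑ i, m i) / N with hc
  have hfeas : ∑ i, (m i + c) = b := by
    rw [sum_add_distrib, sum_const, card_univ, nsmul_eq_mul, hc]
    field_simp
    ring
  have key : α / 2 * ∑ i, (x i - m i) ^ 2 ≤ β / 2 * (N * c ^ 2) :=
    calc α / 2 * ∑ i, (x i - m i) ^ 2 ≤ ∑ i, g i (x i) := by
          rw [mul_sum]; exact sum_le_sum fun i _ => hlow i (x i)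
      _ ≤ ∑ i, g i (m i + c) := hmin _ hfeas
      _ ≤ ∑ _i : ι, β / 2 * c ^ 2 := sum_le_sum fun i _ => by simpa using hupp i (m i + c)
      _ = β / 2 * (N * c ^ 2) := by rw [sum_const, card_univ, nsmul_eq_mul]; ring
  calc ∑ i, (x i - m i) ^ 2 ≤ β / 2 * (N * c ^ 2) / (α / 2) := by
        rw [le_div_iff₀' (by positivity)]; exact key
    _ = β / α * N * c ^ 2 := by field_simp

lemma sqrt_sum_sq_le_add {ι : Type*} [Fintype ι] (x m : ι → ℝ) :
    √(∑ i, x i ^ 2) ≤ √(∑ i, m i ^ 2) + √(∑ i, (x i - m i) ^ 2) := by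
  have h := norm_le_norm_add_norm_sub' (WithLp.toLp 2 x : EuclideanSpace ℝ ι) (WithLp.toLp 2 m)
  simpa only [EuclideanSpace.norm_eq, ← WithLp.toLp_sub, Real.norm_eq_abs, sq_abs, Pi.sub_apply]
    using h

lemma abs_sub_div_le_one_add {b s N : ℝ} (hN : 0 ≤ N) (hs : |s| ≤ N) :
    |(b - s) / N| ≤ 1 + |b| / N := by
  rw [abs_div, abs_of_nonneg hN]
  calc |b - s| / N ≤ (|b| + N) / N := by gcongr; exact (abs_sub _ _).trans (by gcongr)
    _ = |b| / N + N / N := add_div _ _ _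
    _ ≤ 1 + |b| / N := by linarith [div_self_le_one N]

theorem constrained_minimizer_in_ball_general (n : ℕ) (hn : 1 ≤ n) (α β b : ℝ)
    (hα : 0 < α)
    (g : Fin n → ℝ → ℝ)
    (hdiff : ∀ i x, DifferentiableAt ℝ (g i) x)
    (hconv : ∀ i, ConvexOn ℝ Set.univ (fun x => g i x - α / 2 * x ^ 2))
    (hsmooth : ∀ i x y, |deriv (g i) x - deriv (g i) y| ≤ β * |x - y|)
    (hloc : ∀ i, ∃ m : ℝ, m ∈ Set.Icc (-1 : ℝ) 1 ∧ (∀ y, g i m ≤ g i y) ∧ g i m = 0)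
    (xstar : Fin n → ℝ)
    (hmin : ∀ y : Fin n → ℝ, ∑ i, y i = b →
      ∑ i, g i (xstar i) ≤ ∑ i, g i (y i)) :
    Real.sqrt (∑ i, xstar i ^ 2) ≤
      Real.sqrt n + (1 + |b| / n) * Real.sqrt (β / α * n) := by
  have : Nonempty (Fin n) := ⟨⟨0, hn⟩⟩
  choose m hm_mem hm_min hm_zero using hloc
  have hm_crit (i) : deriv (g i) (m i) = 0 :=
    IsLocalMin.deriv_eq_zero (Filter.Eventually.of_forall (hm_min i))
  have hlow (i t) : α / 2 * (t - m i) ^ 2 ≤ g i t := by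
    simpa [hm_crit i, hm_zero i] using
      add_mul_sub_add_sq_le_of_convexOn_sub_sq (hconv i) (hdiff i (m i)).hasDerivAt t
  have hupp (i t) : g i t ≤ β / 2 * (t - m i) ^ 2 := by
    simpa [hm_crit i, hm_zero i] using
      le_add_mul_sub_add_sq_of_abs_deriv_sub_le (hdiff i) (hsmooth i) (m i) t
  have hdist := sum_sq_sub_le_of_forall_sum_le hα hlow hupp hmin
  rw [Fintype.card_fin] at hdist
  have hm_sq : ∑ i, m i ^ 2 ≤ n := by
    simpa using sum_le_sum (s := univ) fun i _ =>
      (sq_le_one_iff_abs_le_one (m i)).mpr (abs_le.mpr (hm_mem i))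
  have hm_sum : |∑ i, m i| ≤ n := by
    simpa using (abs_sum_le_sum_abs _ univ).trans (sum_le_sum fun i _ => abs_le.mpr (hm_mem i))
  calc √(∑ i, xstar i ^ 2) ≤ √(∑ i, m i ^ 2) + √(∑ i, (xstar i - m i) ^ 2) :=
        sqrt_sum_sq_le_add _ _
    _ ≤ √n + √(β / α * n) * |(b - ∑ i, m i) / n| := by
        rw [← Real.sqrt_sq_eq_abs, ← Real.sqrt_mul' _ (sq_nonneg _)]
        gcongr
    _ ≤ √n + (1 + |b| / n) * √(β / α * n) := by
        rw [mul_comm]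
        gcongr
        exact abs_sub_div_le_one_add n.cast_nonneg hm_sum

/-- The constrained minimizer lies in the ball of radius
`R = √n + (1 + |b|/n)√(κn)` centered at the origin, where `κ = β/α`. -/
theorem constrained_minimizer_in_ball (n : ℕ) (hn : 1 ≤ n) (α β b : ℝ)
    (hα : 0 < α) (hαβ : α ≤ β)
    (g : Fin n → ℝ → ℝ)
    (hdiff : ∀ i x, DifferentiableAt ℝ (g i) x)
    (hconv : ∀ i, ConvexOn ℝ Set.univ (fun x => g i x - α / 2 * x ^ 2))
    (hsmooth : ∀ i x y, |deriv (g i) x - deriv (g i) y| ≤ β * |x - y|)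
    (hloc : ∀ i, ∃ m : ℝ, m ∈ Set.Icc (-1 : ℝ) 1 ∧ (∀ y, g i m ≤ g i y) ∧ g i m = 0)
    (xstar : Fin n → ℝ)
    (hfeas : ∑ i, xstar i = b)
    (hmin : ∀ y : Fin n → ℝ, ∑ i, y i = b →
      ∑ i, g i (xstar i) ≤ ∑ i, g i (y i)) :
    Real.sqrt (∑ i, xstar i ^ 2) ≤
      Real.sqrt n + (1 + |b| / n) * Real.sqrt (β / α * n) :=
  constrained_minimizer_in_ball_general n hn α β b hα g hdiff hconv hsmooth hloc xstar hmin
end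

section
/- Quadratic case, change of curvature only: if only θ_n changes from θ_n⁽¹⁾ to θ_n⁽²⁾ (with all θ ∈ (1/2)[α,β] and all μⱼ ∈ [−1,1]), then for each coordinate i ≠ n of the two constrained minimizers, (xᵢ⁽¹⁾ − xᵢ⁽²⁾)² ≤ 4(|b|+n)²(κ−1)²κ²/n⁴. -/
/-- Quadratic case, change of curvature only: if only `θ_n` changes (from
`θ_n⁽¹⁾` to `θ_n⁽²⁾`), then every non-replaced coordinate of the two
constrained minimizers satisfies
`(xᵢ⁽¹⁾ − xᵢ⁽²⁾)² ≤ 4(|b|+n)²(κ−1)²κ²/n⁴`. -/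
theorem quadratic_theta_change_other_coords (n : ℕ) (hn : 2 ≤ n) (α β b : ℝ)
    (hα : 0 < α) (hαβ : α ≤ β) (i₀ : Fin n)
    (θ μ : Fin n → ℝ) (t₁ t₂ : ℝ)
    (hθ : ∀ j, j ≠ i₀ → θ j ∈ Set.Icc (α / 2) (β / 2))
    (ht₁ : t₁ ∈ Set.Icc (α / 2) (β / 2)) (ht₂ : t₂ ∈ Set.Icc (α / 2) (β / 2))
    (hμ : ∀ j, μ j ∈ Set.Icc (-1 : ℝ) 1)
    (ζ₁ ζ₂ : ℝ)
    (hζ₁ : ζ₁ = (∑ j ∈ Finset.univ.erase i₀, 1 / θ j) + 1 / t₁)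
    (hζ₂ : ζ₂ = (∑ j ∈ Finset.univ.erase i₀, 1 / θ j) + 1 / t₂)
    (x₁ x₂ : Fin n → ℝ)
    (hx₁ : ∀ i, i ≠ i₀ → x₁ i = μ i + (b - ∑ j, μ j) / (θ i * ζ₁))
    (hx₂ : ∀ i, i ≠ i₀ → x₂ i = μ i + (b - ∑ j, μ j) / (θ i * ζ₂)) :
    ∀ i, i ≠ i₀ → (x₁ i - x₂ i) ^ 2 ≤
      4 * (|b| + n) ^ 2 * (β / α - 1) ^ 2 * (β / α) ^ 2 / (n : ℝ) ^ 4 := by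
  intro i hi
  have hβ : 0 < β := lt_of_lt_of_le hα hαβ
  have hn0 : (0 : ℝ) < n := by positivity
  have hn1 : (1 : ℝ) ≤ (n : ℝ) := by exact_mod_cast Nat.one_le_of_lt hn
  -- bounds on 1/t
  have hinv : ∀ t : ℝ, t ∈ Set.Icc (α/2) (β/2) → 2/β ≤ 1/t ∧ 1/t ≤ 2/α := by
    intro t ht
    have ht0 : 0 < t := lt_of_lt_of_le (by linarith) ht.1
    constructor
    · rw [div_le_div_iff₀ hβ ht0]; linarith [ht.2]
    · rw [div_le_div_iff₀ ht0 hα]; linarith [ht.1]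
  -- sum lower bound
  have hsum : (n - 1 : ℝ) * (2/β) ≤ ∑ j ∈ Finset.univ.erase i₀, 1 / θ j := by
    have hcard : ((Finset.univ.erase i₀).card : ℝ) = (n : ℝ) - 1 := by
      rw [Finset.card_erase_of_mem (Finset.mem_univ i₀), Finset.card_univ, Fintype.card_fin]
      have : (1:ℕ) ≤ n := by omega
      push_cast [Nat.cast_sub this]
      ring
    calc (n - 1 : ℝ) * (2/β) = (Finset.univ.erase i₀).card * (2/β) := by rw [hcard]
      _ ≤ ∑ j ∈ Finset.univ.erase i₀, 1 / θ j := by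
          rw [Finset.card_eq_sum_ones, Nat.cast_sum]
          push_cast
          rw [Finset.sum_mul]
          apply Finset.sum_le_sum
          intro j hj
          have := (hinv (θ j) (hθ j (Finset.ne_of_mem_erase hj))).1
          linarith
  have hζ1lb : 2*n/β ≤ ζ₁ := by
    have := (hinv t₁ ht₁).1
    rw [hζ₁]
    have : (n - 1 : ℝ) * (2/β) + 2/β = 2*n/β := by field_simp; ring
    linarith [(hinv t₁ ht₁).1, hsum, this]
  have hζ2lb : 2*n/β ≤ ζ₂ := by
    rw [hζ₂]
    have : (n - 1 : ℝ) * (2/β) + 2/β = 2*n/β := by field_simp; ring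
    linarith [(hinv t₂ ht₂).1, hsum, this]
  have h2nβ : (0:ℝ) < 2*n/β := by positivity
  have hζ1pos : 0 < ζ₁ := lt_of_lt_of_le h2nβ hζ1lb
  have hζ2pos : 0 < ζ₂ := lt_of_lt_of_le h2nβ hζ2lb
  have hθi := hθ i hi
  have hθipos : 0 < θ i := lt_of_lt_of_le (by linarith) hθi.1
  -- the difference
  set M := b - ∑ j, μ j with hM
  have hMd : |M| ≤ |b| + n := by
    have h1 : |∑ j, μ j| ≤ (n : ℝ) := by
      calc |∑ j, μ j| ≤ ∑ j, |μ j| := Finset.abs_sum_le_sum_abs _ _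
        _ ≤ ∑ _j : Fin n, (1:ℝ) := Finset.sum_le_sum (fun j _ => abs_le.mpr ⟨(hμ j).1, (hμ j).2⟩)
        _ = n := by simp
    calc |M| ≤ |b| + |∑ j, μ j| := abs_sub _ _
      _ ≤ |b| + n := by linarith
  have hdiff : x₁ i - x₂ i = M * (ζ₂ - ζ₁) / (θ i * ζ₁ * ζ₂) := by
    rw [hx₁ i hi, hx₂ i hi]
    field_simp
    ring
  have hζdiff : |ζ₂ - ζ₁| ≤ 2/α - 2/β := by
    rw [hζ₁, hζ₂]
    have h1 := hinv t₁ ht₁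
    have h2 := hinv t₂ ht₂
    rw [abs_le]
    constructor <;> [skip; skip] <;> · simp only [add_sub_add_left_eq_sub]; linarith [h1.1, h1.2, h2.1, h2.2]
  -- bound
  have habs : |x₁ i - x₂ i| ≤ ((|b| + n) * (2/α - 2/β)) / ((α/2) * (2*n/β) * (2*n/β)) := by
    rw [hdiff, abs_div, abs_mul]
    have hdenpos : 0 < (α/2) * (2*n/β) * (2*n/β) := by positivity
    have hdenabs : |θ i * ζ₁ * ζ₂| = θ i * ζ₁ * ζ₂ := abs_of_pos (by positivity)
    rw [hdenabs]
    have hαβinv : 2/β ≤ 2/α := by rw [div_le_div_iff₀ hβ hα]; linarith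
    have hDnn : (0:ℝ) ≤ |b| + n := by positivity
    apply div_le_div₀ (mul_nonneg hDnn (by linarith)) _ hdenpos _
    · apply mul_le_mul hMd hζdiff (abs_nonneg _) hDnn
    · apply mul_le_mul (mul_le_mul (by linarith [hθi.1]) hζ1lb (le_of_lt h2nβ) (le_of_lt hθipos)) hζ2lb (le_of_lt h2nβ) (by positivity)
  have hC : ((|b| + n) * (2/α - 2/β)) / ((α/2) * (2*n/β) * (2*n/β)) ≤
      2 * (|b| + n) * (β/α - 1) * (β/α) / (n:ℝ)^2 := by
    have e1 : ((|b| + n) * (2/α - 2/β)) / ((α/2) * (2*n/β) * (2*n/β))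
        = (|b|+n)*(β-α)*β/(α^2*(n:ℝ)^2) := by field_simp
    have e2 : 2 * (|b| + n) * (β/α - 1) * (β/α) / (n:ℝ)^2
        = 2 * ((|b|+n)*(β-α)*β/(α^2*(n:ℝ)^2)) := by field_simp
    have h0 : 0 ≤ (|b|+n)*(β-α)*β/(α^2*(n:ℝ)^2) := by
      apply div_nonneg _ (by positivity)
      exact mul_nonneg (mul_nonneg (by positivity) (by linarith)) hβ.le
    rw [e1, e2]; linarith
  have hfin : |x₁ i - x₂ i| ≤ 2 * (|b| + n) * (β/α - 1) * (β/α) / (n:ℝ)^2 :=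
    le_trans habs hC
  have := pow_le_pow_left₀ (abs_nonneg _) hfin 2
  rw [sq_abs] at this
  calc (x₁ i - x₂ i)^2 ≤ (2 * (|b| + n) * (β/α - 1) * (β/α) / (n:ℝ)^2)^2 := this
    _ = 4 * (|b| + n) ^ 2 * (β / α - 1) ^ 2 * (β / α) ^ 2 / (n : ℝ) ^ 4 := by ring
end

section
/- Quadratic case, change of curvature only, replaced coordinate: under the same setting, the n-th coordinate satisfies (x_n⁽¹⁾ − x_n⁽²⁾)² ≤ 4(|b|+n)²(κ−1)²κ⁴/n². -/
/-- Quadratic case, change of curvature only, replaced coordinate: under the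
same setting, the replaced coordinate satisfies
`(x_n⁽¹⁾ − x_n⁽²⁾)² ≤ 4(|b|+n)²(κ−1)²κ⁴/n²`. -/
theorem quadratic_theta_change_replaced_coord (n : ℕ) (hn : 2 ≤ n) (α β b : ℝ)
    (hα : 0 < α) (hαβ : α ≤ β) (i₀ : Fin n)
    (θ μ : Fin n → ℝ) (t₁ t₂ : ℝ)
    (hθ : ∀ j, j ≠ i₀ → θ j ∈ Set.Icc (α / 2) (β / 2))
    (ht₁ : t₁ ∈ Set.Icc (α / 2) (β / 2)) (ht₂ : t₂ ∈ Set.Icc (α / 2) (β / 2))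
    (hμ : ∀ j, μ j ∈ Set.Icc (-1 : ℝ) 1)
    (ζ₁ ζ₂ : ℝ)
    (hζ₁ : ζ₁ = (∑ j ∈ Finset.univ.erase i₀, 1 / θ j) + 1 / t₁)
    (hζ₂ : ζ₂ = (∑ j ∈ Finset.univ.erase i₀, 1 / θ j) + 1 / t₂)
    (x₁ x₂ : Fin n → ℝ)
    (hx₁ : x₁ i₀ = μ i₀ + (b - ∑ j, μ j) / (t₁ * ζ₁))
    (hx₂ : x₂ i₀ = μ i₀ + (b - ∑ j, μ j) / (t₂ * ζ₂)) :
    (x₁ i₀ - x₂ i₀) ^ 2 ≤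
      4 * (|b| + n) ^ 2 * (β / α - 1) ^ 2 * (β / α) ^ 4 / (n : ℝ) ^ 2 := by
  have hβ : 0 < β := lt_of_lt_of_le hα hαβ
  have hn' : (2:ℝ) ≤ (n:ℝ) := by exact_mod_cast hn
  have hn0 : (0:ℝ) < (n:ℝ) := by linarith
  have ht₁0 : 0 < t₁ := lt_of_lt_of_le (by linarith) ht₁.1
  have ht₂0 : 0 < t₂ := lt_of_lt_of_le (by linarith) ht₂.1
  set S : ℝ := ∑ j ∈ Finset.univ.erase i₀, 1 / θ j with hS
  set M : ℝ := ∑ j, μ j with hM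
  clear_value S M
  have hcard : ((Finset.univ.erase i₀).card : ℝ) = (n:ℝ) - 1 := by
    rw [Finset.card_erase_of_mem (Finset.mem_univ _), Finset.card_univ, Fintype.card_fin]
    have h1 : 1 ≤ n := by omega
    push_cast [h1]
    ring
  -- bounds on S
  have hSlb : ((n:ℝ) - 1) * (2/β) ≤ S := by
    rw [← hcard]
    have := Finset.card_nsmul_le_sum (Finset.univ.erase i₀) (fun j => 1/θ j) (2/β) ?_
    · rw [nsmul_eq_mul] at this
      rw [hS]
      exact this
    · intro j hj
      obtain ⟨h1, h2⟩ := hθ j (Finset.ne_of_mem_erase hj)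
      have hθ0 : 0 < θ j := lt_of_lt_of_le (by linarith) h1
      rw [div_le_div_iff₀ hβ hθ0]
      linarith
  have hSub : S ≤ ((n:ℝ) - 1) * (2/α) := by
    rw [← hcard]
    have := Finset.sum_le_card_nsmul (Finset.univ.erase i₀) (fun j => 1/θ j) (2/α) ?_
    · rw [nsmul_eq_mul] at this
      rw [hS]
      exact this
    · intro j hj
      obtain ⟨h1, h2⟩ := hθ j (Finset.ne_of_mem_erase hj)
      have hθ0 : 0 < θ j := lt_of_lt_of_le (by linarith) h1
      rw [div_le_div_iff₀ hθ0 hα]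
      linarith
  have hS0 : 0 ≤ S := le_trans (mul_nonneg (by linarith) (by positivity)) hSlb
  have hSub' : S ≤ (n:ℝ) * (2/α) := by
    have : ((n:ℝ) - 1) * (2/α) ≤ (n:ℝ) * (2/α) := by
      have h2α : 0 ≤ 2/α := by positivity
      nlinarith
    linarith
  -- the two denominators
  have hA : t₁ * ζ₁ = t₁ * S + 1 := by
    rw [hζ₁]; field_simp
  have hB : t₂ * ζ₂ = t₂ * S + 1 := by
    rw [hζ₂]; field_simp
  have hApos : (0:ℝ) < t₁ * S + 1 := by positivity
  have hBpos : (0:ℝ) < t₂ * S + 1 := by positivity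
  -- lower bound on denominators
  have hSβ : 2 * ((n:ℝ) - 1) ≤ S * β := by
    have h := mul_le_mul_of_nonneg_right hSlb hβ.le
    have h2 : ((n:ℝ) - 1) * (2/β) * β = 2 * ((n:ℝ) - 1) := by field_simp
    linarith
  have hAlb : (n:ℝ) * α / β ≤ t₁ * S + 1 := by
    rw [div_le_iff₀ hβ]
    have h1 := mul_le_mul_of_nonneg_left hSβ (by positivity : (0:ℝ) ≤ α/2)
    have h2 := mul_le_mul_of_nonneg_right ht₁.1 (mul_nonneg hS0 hβ.le)
    linarith
  have hBlb : (n:ℝ) * α / β ≤ t₂ * S + 1 := by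
    rw [div_le_iff₀ hβ]
    have h1 := mul_le_mul_of_nonneg_left hSβ (by positivity : (0:ℝ) ≤ α/2)
    have h2 := mul_le_mul_of_nonneg_right ht₂.1 (mul_nonneg hS0 hβ.le)
    linarith
  have hQpos : (0:ℝ) < ((n:ℝ) * α / β) ^ 2 := by positivity
  have hQle : ((n:ℝ) * α / β) ^ 2 ≤ (t₁ * S + 1) * (t₂ * S + 1) := by
    have h0 : (0:ℝ) ≤ (n:ℝ) * α / β := by positivity
    calc ((n:ℝ) * α / β) ^ 2 = ((n:ℝ) * α / β) * ((n:ℝ) * α / β) := sq ((n:ℝ) * α / β)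
    _ ≤ (t₁ * S + 1) * (t₂ * S + 1) := mul_le_mul hAlb hBlb h0 (by linarith)
  -- the difference
  have hD : x₁ i₀ - x₂ i₀ =
      (b - M) * ((t₂ - t₁) * S) / ((t₁ * S + 1) * (t₂ * S + 1)) := by
    rw [hx₁, hx₂, hA, hB]
    field_simp
    ring
  -- numerator bound
  have hMabs : |M| ≤ (n:ℝ) := by
    rw [hM]
    calc |∑ j, μ j| ≤ ∑ j, |μ j| := Finset.abs_sum_le_sum_abs _ _
    _ ≤ ∑ _j : Fin n, (1:ℝ) := by
        apply Finset.sum_le_sum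
        intro j _
        exact abs_le.mpr ⟨(hμ j).1, (hμ j).2⟩
    _ = (n:ℝ) := by simp
  have hbM : |b - M| ≤ |b| + (n:ℝ) := by
    calc |b - M| ≤ |b| + |M| := abs_sub _ _
    _ ≤ |b| + (n:ℝ) := by linarith
  have htt : |t₂ - t₁| ≤ (β - α) / 2 := by
    rw [abs_sub_le_iff]
    constructor <;> [skip; skip] <;>
      · obtain ⟨a1, a2⟩ := ht₁; obtain ⟨b1, b2⟩ := ht₂; linarith
  have hSabs : |S| ≤ (n:ℝ) * (2/α) := by
    rw [abs_of_nonneg hS0]; exact hSub'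
  set Nmax : ℝ := (|b| + (n:ℝ)) * ((β - α) / 2) * ((n:ℝ) * (2/α)) with hNmax
  have hNabs : |(b - M) * ((t₂ - t₁) * S)| ≤ Nmax := by
    have h1 : (0:ℝ) ≤ |b| + (n:ℝ) := by positivity
    have h2 : (0:ℝ) ≤ (β - α) / 2 := by linarith
    have h3 : |(b - M) * ((t₂ - t₁) * S)| = |b - M| * |t₂ - t₁| * |S| := by
      rw [abs_mul, abs_mul, mul_assoc]
    rw [h3, hNmax]
    exact mul_le_mul (mul_le_mul hbM htt (abs_nonneg _) h1) hSabs (abs_nonneg _) (by positivity)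
  have hN2 : ((b - M) * ((t₂ - t₁) * S)) ^ 2 ≤ Nmax ^ 2 := by
    have := pow_le_pow_left₀ (abs_nonneg ((b - M) * ((t₂ - t₁) * S))) hNabs 2
    rwa [sq_abs] at this
  -- denominator squared bound
  have hP2 : (((n:ℝ) * α / β) ^ 2) ^ 2 ≤ ((t₁ * S + 1) * (t₂ * S + 1)) ^ 2 :=
    pow_le_pow_left₀ hQpos.le hQle 2
  -- combine
  have hmain : (x₁ i₀ - x₂ i₀) ^ 2 ≤ Nmax ^ 2 / (((n:ℝ) * α / β) ^ 2) ^ 2 := by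
    rw [hD, div_pow]
    exact div_le_div₀ (by positivity) hN2 (by positivity) hP2
  have hkey : 4 * (|b| + (n:ℝ)) ^ 2 * (β / α - 1) ^ 2 * (β / α) ^ 4 / (n : ℝ) ^ 2 =
      4 * (Nmax ^ 2 / (((n:ℝ) * α / β) ^ 2) ^ 2) := by
    rw [hNmax]
    field_simp
  have hpos : (0:ℝ) ≤ Nmax ^ 2 / (((n:ℝ) * α / β) ^ 2) ^ 2 := by positivity
  calc (x₁ i₀ - x₂ i₀) ^ 2 ≤ Nmax ^ 2 / (((n:ℝ) * α / β) ^ 2) ^ 2 := hmain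
  _ ≤ 4 * (Nmax ^ 2 / (((n:ℝ) * α / β) ^ 2) ^ 2) := by linarith
  _ = 4 * (|b| + (n:ℝ)) ^ 2 * (β / α - 1) ^ 2 * (β / α) ^ 4 / (n : ℝ) ^ 2 := hkey.symm
end

section
/- Quadratic minimizer shift bound: if the function of agent n (both θ_n and μ_n) is replaced, then ‖x⁽²⁾ − x⁽¹⁾‖² ≤ 8((κ³ + κn − 2)/(κn)) + 8(|b|+n)²(κ−1)²κ²(κ²n² + n − 1)/n⁴. -/
lemma minimizer_eq {n : ℕ} (i₀ : Fin n) (θ μ : Fin n → ℝ) (t m b : ℝ)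
    (hθpos : ∀ j ∈ Finset.univ.erase i₀, 0 < θ j) (ht : 0 < t)
    (x : Fin n → ℝ) (hfeas : ∑ i, x i = b)
    (hmin : ∀ y : Fin n → ℝ, ∑ i, y i = b →
      (∑ j ∈ Finset.univ.erase i₀, θ j * (x j - μ j) ^ 2) + t * (x i₀ - m) ^ 2 ≤
      (∑ j ∈ Finset.univ.erase i₀, θ j * (y j - μ j) ^ 2) + t * (y i₀ - m) ^ 2) :
    ∀ j, x j = if j = i₀ then
        m + ((b - (∑ j ∈ Finset.univ.erase i₀, μ j) - m) /
          ((∑ j ∈ Finset.univ.erase i₀, (θ j)⁻¹) + t⁻¹)) * t⁻¹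
      else μ j + ((b - (∑ j ∈ Finset.univ.erase i₀, μ j) - m) /
          ((∑ j ∈ Finset.univ.erase i₀, (θ j)⁻¹) + t⁻¹)) * (θ j)⁻¹ := by
  classical
  set E := Finset.univ.erase i₀ with hE
  set S := ∑ j ∈ E, (θ j)⁻¹ with hS
  set M := ∑ j ∈ E, μ j with hM
  have hSnn : 0 ≤ S := Finset.sum_nonneg fun j hj => (inv_pos.2 (hθpos j hj)).le
  have hT : 0 < S + t⁻¹ := by positivity
  set T := S + t⁻¹ with hTdef
  set c := (b - M - m) / T with hc
  set z : Fin n → ℝ := fun j => if j = i₀ then m + c * t⁻¹ else μ j + c * (θ j)⁻¹ with hz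
  have hzE : ∀ j ∈ E, z j = μ j + c * (θ j)⁻¹ := by
    intro j hj
    simp [hz, Finset.ne_of_mem_erase hj]
  have hzi : z i₀ = m + c * t⁻¹ := by simp [hz]
  have hzsum : ∑ i, z i = b := by
    rw [← Finset.sum_erase_add _ _ (Finset.mem_univ i₀), ← hE, Finset.sum_congr rfl hzE,
      hzi, Finset.sum_add_distrib, ← Finset.mul_sum, ← hS, ← hM]
    have : c * T = b - M - m := by
      rw [hc]; field_simp
    rw [hTdef] at this
    linarith
  have hidg : ∀ y : Fin n → ℝ,
      (∑ j ∈ E, θ j * (y j - μ j) ^ 2) + t * (y i₀ - m) ^ 2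
      = ((∑ j ∈ E, θ j * (y j - z j) ^ 2) + t * (y i₀ - z i₀) ^ 2)
        + 2 * c * ((∑ i, y i) - b) + c ^ 2 * T := by
    intro y
    have hpt : ∀ j ∈ E, θ j * (y j - μ j) ^ 2
        = θ j * (y j - z j) ^ 2 + 2 * c * (y j - z j) + c ^ 2 * (θ j)⁻¹ := by
      intro j hj
      have hθj := hθpos j hj
      rw [hzE j hj]
      field_simp
      ring
    have hpt0 : t * (y i₀ - m) ^ 2
        = t * (y i₀ - z i₀) ^ 2 + 2 * c * (y i₀ - z i₀) + c ^ 2 * t⁻¹ := by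
      rw [hzi]; field_simp; ring
    have hsplit : (∑ i, y i) - b = (∑ j ∈ E, (y j - z j)) + (y i₀ - z i₀) := by
      have h1 : ∑ i, (y i - z i) = (∑ i, y i) - b := by
        rw [Finset.sum_sub_distrib, hzsum]
      rw [← h1, ← Finset.sum_erase_add _ _ (Finset.mem_univ i₀), ← hE]
    rw [Finset.sum_congr rfl hpt, hpt0, hsplit]
    rw [Finset.sum_add_distrib, Finset.sum_add_distrib, ← Finset.mul_sum, ← Finset.mul_sum, ← hS]
    ring
  have hQ : ((∑ j ∈ E, θ j * (x j - z j) ^ 2) + t * (x i₀ - z i₀) ^ 2) ≤ 0 := by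
    have h1 := hmin z hzsum
    have h2 := hidg x
    have h3 := hidg z
    rw [hfeas, hzsum] at *
    simp at h2 h3
    nlinarith [h1, h2, h3]
  have hsumnn : 0 ≤ ∑ j ∈ E, θ j * (x j - z j) ^ 2 :=
    Finset.sum_nonneg fun j hj => mul_nonneg (hθpos j hj).le (sq_nonneg _)
  have htnn : 0 ≤ t * (x i₀ - z i₀) ^ 2 := mul_nonneg ht.le (sq_nonneg _)
  have hsum0 : ∑ j ∈ E, θ j * (x j - z j) ^ 2 = 0 := le_antisymm (by linarith) hsumnn
  have hti0 : x i₀ = z i₀ := by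
    have : t * (x i₀ - z i₀) ^ 2 = 0 := le_antisymm (by linarith) htnn
    have := (mul_eq_zero.1 this).resolve_left (ne_of_gt ht)
    have := pow_eq_zero_iff (n := 2) (by norm_num) |>.1 this
    linarith
  have hEeq : ∀ j ∈ E, x j = z j := by
    intro j hj
    have h := (Finset.sum_eq_zero_iff_of_nonneg
      (fun j hj => mul_nonneg (hθpos j hj).le (sq_nonneg _))).1 hsum0 j hj
    have := (mul_eq_zero.1 h).resolve_left (ne_of_gt (hθpos j hj))
    have := pow_eq_zero_iff (n := 2) (by norm_num) |>.1 this
    linarith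
  intro j
  by_cases hji : j = i₀
  · subst hji
    rw [hti0, hzi]
    simp
  · have hjE : j ∈ E := Finset.mem_erase.2 ⟨hji, Finset.mem_univ j⟩
    rw [hEeq j hjE, hzE j hjE]
    simp [hji]

set_option maxHeartbeats 2000000 in
/-- Quadratic minimizer shift bound: if the function of one agent (both `θ` and
`μ`) is replaced, then
`‖x⁽²⁾ − x⁽¹⁾‖² ≤ 8((κ³+κn−2)/(κn)) + 8(|b|+n)²(κ−1)²κ²(κ²n²+n−1)/n⁴`. -/
theorem quadratic_minimizer_shift (n : ℕ) (hn : 2 ≤ n) (α β b : ℝ)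
    (hα : 0 < α) (hαβ : α ≤ β) (i₀ : Fin n)
    (θ μ : Fin n → ℝ) (t₁ t₂ m₁ m₂ : ℝ)
    (hθ : ∀ j, j ≠ i₀ → θ j ∈ Set.Icc (α / 2) (β / 2))
    (hμ : ∀ j, j ≠ i₀ → μ j ∈ Set.Icc (-1 : ℝ) 1)
    (ht₁ : t₁ ∈ Set.Icc (α / 2) (β / 2)) (ht₂ : t₂ ∈ Set.Icc (α / 2) (β / 2))
    (hm₁ : m₁ ∈ Set.Icc (-1 : ℝ) 1) (hm₂ : m₂ ∈ Set.Icc (-1 : ℝ) 1)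
    (x₁ x₂ : Fin n → ℝ)
    (hfeas₁ : ∑ i, x₁ i = b) (hfeas₂ : ∑ i, x₂ i = b)
    (hmin₁ : ∀ y : Fin n → ℝ, ∑ i, y i = b →
      (∑ j ∈ Finset.univ.erase i₀, θ j * (x₁ j - μ j) ^ 2) + t₁ * (x₁ i₀ - m₁) ^ 2 ≤
      (∑ j ∈ Finset.univ.erase i₀, θ j * (y j - μ j) ^ 2) + t₁ * (y i₀ - m₁) ^ 2)
    (hmin₂ : ∀ y : Fin n → ℝ, ∑ i, y i = b →
      (∑ j ∈ Finset.univ.erase i₀, θ j * (x₂ j - μ j) ^ 2) + t₂ * (x₂ i₀ - m₂) ^ 2 ≤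
      (∑ j ∈ Finset.univ.erase i₀, θ j * (y j - μ j) ^ 2) + t₂ * (y i₀ - m₂) ^ 2) :
    ∑ i, (x₂ i - x₁ i) ^ 2 ≤
      8 * (((β / α) ^ 3 + (β / α) * n - 2) / ((β / α) * n)) +
        8 * (|b| + n) ^ 2 * (β / α - 1) ^ 2 * (β / α) ^ 2 *
          ((β / α) ^ 2 * (n : ℝ) ^ 2 + n - 1) / (n : ℝ) ^ 4 := by
  classical
  have hβ : 0 < β := lt_of_lt_of_le hα hαβ
  have hθpos : ∀ j ∈ Finset.univ.erase i₀, 0 < θ j := fun j hj =>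
    lt_of_lt_of_le (by linarith) (hθ j (Finset.ne_of_mem_erase hj)).1
  have ht₁pos : 0 < t₁ := lt_of_lt_of_le (by linarith) ht₁.1
  have ht₂pos : 0 < t₂ := lt_of_lt_of_le (by linarith) ht₂.1
  have hx₁ := minimizer_eq i₀ θ μ t₁ m₁ b hθpos ht₁pos x₁ hfeas₁ hmin₁
  have hx₂ := minimizer_eq i₀ θ μ t₂ m₂ b hθpos ht₂pos x₂ hfeas₂ hmin₂
  set E := Finset.univ.erase i₀ with hE
  set S := ∑ j ∈ E, (θ j)⁻¹ with hSdef
  set M := ∑ j ∈ E, μ j with hMdef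
  set W := ∑ j ∈ E, ((θ j)⁻¹) ^ 2 with hWdef
  set K := β / α with hKdef
  set A := |b| + (n : ℝ) with hAdef
  set T₁ := S + t₁⁻¹ with hT₁def
  set T₂ := S + t₂⁻¹ with hT₂def
  set c₁ := (b - M - m₁) / T₁ with hc₁def
  set c₂ := (b - M - m₂) / T₂ with hc₂def
  have hn2 : (2 : ℝ) ≤ (n : ℝ) := by exact_mod_cast hn
  have hnpos : (0 : ℝ) < (n : ℝ) := by linarith
  have hK1 : 1 ≤ K := (one_le_div hα).2 hαβ
  have hKpos : 0 < K := by linarith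
  have hcardN : E.card = n - 1 := by
    rw [hE, Finset.card_erase_of_mem (Finset.mem_univ _), Finset.card_univ, Fintype.card_fin]
  have hcard : (E.card : ℝ) = (n : ℝ) - 1 := by
    rw [hcardN, Nat.cast_sub (by omega)]; norm_num
  -- inverse bounds
  have hinv : ∀ j ∈ E, 2 / β ≤ (θ j)⁻¹ ∧ (θ j)⁻¹ ≤ 2 / α := by
    intro j hj
    have h1 := (hθ j (Finset.ne_of_mem_erase hj)).1
    have h2 := (hθ j (Finset.ne_of_mem_erase hj)).2
    have hp := hθpos j hj
    constructor
    · have h := inv_anti₀ hp h2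
      rwa [inv_div] at h
    · have h := inv_anti₀ (by positivity : (0:ℝ) < α / 2) h1
      rwa [inv_div] at h
  have ht₁inv : 2 / β ≤ t₁⁻¹ ∧ t₁⁻¹ ≤ 2 / α := by
    constructor
    · have h := inv_anti₀ ht₁pos ht₁.2
      rwa [inv_div] at h
    · have h := inv_anti₀ (by positivity : (0:ℝ) < α / 2) ht₁.1
      rwa [inv_div] at h
  have ht₂inv : 2 / β ≤ t₂⁻¹ ∧ t₂⁻¹ ≤ 2 / α := by
    constructor
    · have h := inv_anti₀ ht₂pos ht₂.2
      rwa [inv_div] at h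
    · have h := inv_anti₀ (by positivity : (0:ℝ) < α / 2) ht₂.1
      rwa [inv_div] at h
  have hSlb : 2 * ((n:ℝ) - 1) / β ≤ S := by
    have h := Finset.card_nsmul_le_sum E (fun j => (θ j)⁻¹) (2 / β)
      (fun j hj => (hinv j hj).1)
    rw [nsmul_eq_mul, hcard] at h
    calc 2 * ((n:ℝ) - 1) / β = ((n:ℝ) - 1) * (2 / β) := by ring
    _ ≤ S := h
  have hSub : S ≤ 2 * ((n:ℝ) - 1) / α := by
    have h := Finset.sum_le_card_nsmul E (fun j => (θ j)⁻¹) (2 / α)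
      (fun j hj => (hinv j hj).2)
    rw [nsmul_eq_mul, hcard] at h
    calc S ≤ ((n:ℝ) - 1) * (2 / α) := h
    _ = 2 * ((n:ℝ) - 1) / α := by ring
  have hT₁lb : 2 * (n:ℝ) / β ≤ T₁ := by
    rw [hT₁def]
    have h : 2 * (n:ℝ) / β = 2 * ((n:ℝ) - 1) / β + 2 / β := by ring
    linarith [ht₁inv.1]
  have hT₂lb : 2 * (n:ℝ) / β ≤ T₂ := by
    rw [hT₂def]
    have h : 2 * (n:ℝ) / β = 2 * ((n:ℝ) - 1) / β + 2 / β := by ring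
    linarith [ht₂inv.1]
  have hT₁ub : T₁ ≤ 2 * (n:ℝ) / α := by
    rw [hT₁def]
    have h : 2 * (n:ℝ) / α = 2 * ((n:ℝ) - 1) / α + 2 / α := by ring
    linarith [ht₁inv.2]
  have hT₂ub : T₂ ≤ 2 * (n:ℝ) / α := by
    rw [hT₂def]
    have h : 2 * (n:ℝ) / α = 2 * ((n:ℝ) - 1) / α + 2 / α := by ring
    linarith [ht₂inv.2]
  have hT₁pos : 0 < T₁ := lt_of_lt_of_le (by positivity) hT₁lb
  have hT₂pos : 0 < T₂ := lt_of_lt_of_le (by positivity) hT₂lb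
  have hT₁ne : T₁ ≠ 0 := ne_of_gt hT₁pos
  have hT₂ne : T₂ ≠ 0 := ne_of_gt hT₂pos
  have hMb : |M| ≤ (n:ℝ) - 1 := by
    calc |M| ≤ ∑ j ∈ E, |μ j| := by rw [hMdef]; exact Finset.abs_sum_le_sum_abs _ _
    _ ≤ E.card • (1:ℝ) := Finset.sum_le_card_nsmul _ _ 1
        (fun j hj => abs_le.2 ⟨(hμ j (Finset.ne_of_mem_erase hj)).1,
          (hμ j (Finset.ne_of_mem_erase hj)).2⟩)
    _ = (n:ℝ) - 1 := by rw [nsmul_eq_mul, hcard]; ring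
  have hApos : 0 < A := by rw [hAdef]; positivity
  have habs₁ : |b - M - m₁| ≤ A := by
    rw [hAdef]
    have h1 := abs_le.1 hMb
    have h2 := le_abs_self b
    have h3 := neg_abs_le b
    exact abs_le.2 ⟨by linarith [hm₁.1, hm₁.2], by linarith [hm₁.1, hm₁.2]⟩
  have habs₂ : |b - M - m₂| ≤ A := by
    rw [hAdef]
    have h1 := abs_le.1 hMb
    have h2 := le_abs_self b
    have h3 := neg_abs_le b
    exact abs_le.2 ⟨by linarith [hm₂.1, hm₂.2], by linarith [hm₂.1, hm₂.2]⟩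
  have hWnn : 0 ≤ W := Finset.sum_nonneg fun j hj => sq_nonneg _
  have hWub : W ≤ 4 * ((n:ℝ) - 1) / α ^ 2 := by
    have h := Finset.sum_le_card_nsmul E (fun j => ((θ j)⁻¹) ^ 2) ((2 / α) ^ 2)
      (fun j hj => by
        have h1 := (hinv j hj).2
        have h2 : 0 ≤ (θ j)⁻¹ := (inv_pos.2 (hθpos j hj)).le
        nlinarith)
    rw [nsmul_eq_mul, hcard] at h
    calc W ≤ ((n:ℝ) - 1) * ((2 / α) ^ 2) := h
    _ = 4 * ((n:ℝ) - 1) / α ^ 2 := by field_simp; ring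
  set a := (m₁ - m₂) / T₂ with hadef
  set e := (b - M - m₁) * (t₁⁻¹ - t₂⁻¹) / (T₁ * T₂) with hedef
  set u₀ := (m₂ - m₁) + a * t₂⁻¹ with hu₀def
  set v₀ := e * t₂⁻¹ + c₁ * (t₂⁻¹ - t₁⁻¹) with hv₀def
  have hx₁E : ∀ j ∈ E, x₁ j = μ j + c₁ * (θ j)⁻¹ := fun j hj => by
    rw [hx₁ j, if_neg (Finset.ne_of_mem_erase hj)]
  have hx₂E : ∀ j ∈ E, x₂ j = μ j + c₂ * (θ j)⁻¹ := fun j hj => by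
    rw [hx₂ j, if_neg (Finset.ne_of_mem_erase hj)]
  have hx₁i : x₁ i₀ = m₁ + c₁ * t₁⁻¹ := by rw [hx₁ i₀, if_pos rfl]
  have hx₂i : x₂ i₀ = m₂ + c₂ * t₂⁻¹ := by rw [hx₂ i₀, if_pos rfl]
  have hLHS : ∑ i, (x₂ i - x₁ i) ^ 2
      = (c₂ - c₁) ^ 2 * W + ((m₂ - m₁) + c₂ * t₂⁻¹ - c₁ * t₁⁻¹) ^ 2 := by
    rw [← Finset.sum_erase_add _ _ (Finset.mem_univ i₀), ← hE]
    have h1 : ∀ j ∈ E, (x₂ j - x₁ j) ^ 2 = (c₂ - c₁) ^ 2 * ((θ j)⁻¹) ^ 2 := by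
      intro j hj; rw [hx₂E j hj, hx₁E j hj]; ring
    rw [Finset.sum_congr rfl h1, ← Finset.mul_sum, ← hWdef, hx₂i, hx₁i]
    ring
  have hTT : T₁ - T₂ = t₁⁻¹ - t₂⁻¹ := by rw [hT₁def, hT₂def]; ring
  have hc₁T : c₁ * T₁ = b - M - m₁ := by
    rw [hc₁def]; exact div_mul_cancel₀ _ hT₁ne
  have hc₂T : c₂ * T₂ = b - M - m₂ := by
    rw [hc₂def]; exact div_mul_cancel₀ _ hT₂ne
  have haT : a * T₂ = m₁ - m₂ := by
    rw [hadef]; exact div_mul_cancel₀ _ hT₂ne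
  have heT : e * (T₁ * T₂) = (b - M - m₁) * (t₁⁻¹ - t₂⁻¹) := by
    rw [hedef]; exact div_mul_cancel₀ _ (mul_ne_zero hT₁ne hT₂ne)
  have hce : c₂ - c₁ = a + e := by
    have h : (c₂ - c₁) * (T₁ * T₂) = (a + e) * (T₁ * T₂) := by
      linear_combination T₁ * hc₂T - T₂ * hc₁T - T₁ * haT - heT + (b - M - m₁) * hTT
    exact mul_right_cancel₀ (mul_ne_zero hT₁ne hT₂ne) h
  have hdeq : (m₂ - m₁) + c₂ * t₂⁻¹ - c₁ * t₁⁻¹ = u₀ + v₀ := by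
    rw [hu₀def, hv₀def]
    linear_combination t₂⁻¹ * hce
  have hαne : α ≠ 0 := ne_of_gt hα
  have hβne : β ≠ 0 := ne_of_gt hβ
  have hnne : (n:ℝ) ≠ 0 := ne_of_gt hnpos
  have hKne : K ≠ 0 := ne_of_gt hKpos
  -- bound on a
  have hmm : |m₁ - m₂| ≤ 2 :=
    abs_le.2 ⟨by linarith [hm₁.1, hm₂.2], by linarith [hm₁.2, hm₂.1]⟩
  have ha_abs : |a| ≤ β / (n:ℝ) := by
    rw [hadef, abs_div, abs_of_pos hT₂pos]
    calc |m₁ - m₂| / T₂ ≤ 2 / (2 * (n:ℝ) / β) :=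
      div_le_div₀ (by norm_num) hmm (by positivity) hT₂lb
    _ = β / (n:ℝ) := by field_simp
  have ha2 : a ^ 2 ≤ (β / (n:ℝ)) ^ 2 := by
    rw [← sq_abs a]
    exact pow_le_pow_left₀ (abs_nonneg a) ha_abs 2
  have hU1 : a ^ 2 * W ≤ 4 * K ^ 2 * ((n:ℝ) - 1) / (n:ℝ) ^ 2 := by
    calc a ^ 2 * W ≤ (β / (n:ℝ)) ^ 2 * (4 * ((n:ℝ) - 1) / α ^ 2) :=
      mul_le_mul ha2 hWub hWnn (by positivity)
    _ = 4 * K ^ 2 * ((n:ℝ) - 1) / (n:ℝ) ^ 2 := by rw [hKdef]; field_simp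
  -- bound on u₀
  set sᵥ := t₂⁻¹ / T₂ with hsdef
  have hu₀s : u₀ = (m₂ - m₁) * (1 - sᵥ) := by
    rw [hu₀def, hadef, hsdef]
    field_simp
    ring
  have hs_pos : 0 < sᵥ := by rw [hsdef]; positivity
  have hs_lb : 1 / (K * (n:ℝ)) ≤ sᵥ := by
    rw [hsdef]
    have heq : 1 / (K * (n:ℝ)) = (2 / β) / (2 * (n:ℝ) / α) := by
      rw [hKdef]; field_simp
    rw [heq]
    exact div_le_div₀ (by positivity) ht₂inv.1 hT₂pos hT₂ub
  have hs_ub : sᵥ ≤ K / (n:ℝ) := by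
    rw [hsdef]
    calc t₂⁻¹ / T₂ ≤ (2 / α) / (2 * (n:ℝ) / β) :=
      div_le_div₀ (by positivity) ht₂inv.2 (by positivity) hT₂lb
    _ = K / (n:ℝ) := by rw [hKdef]; field_simp
  have hU2 : u₀ ^ 2 ≤ 4 * (1 - 2 / (K * (n:ℝ)) + K ^ 2 / (n:ℝ) ^ 2) := by
    have hm2 : (m₂ - m₁) ^ 2 ≤ 4 := by nlinarith only [hm₁.1, hm₁.2, hm₂.1, hm₂.2]
    have h1s : (1 - sᵥ) ^ 2 ≤ 1 - 2 / (K * (n:ℝ)) + K ^ 2 / (n:ℝ) ^ 2 := by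
      have hsq : sᵥ ^ 2 ≤ (K / (n:ℝ)) ^ 2 := by
        rw [← sq_abs sᵥ, abs_of_pos hs_pos]
        exact pow_le_pow_left₀ hs_pos.le hs_ub 2
      have hKn : (K / (n:ℝ)) ^ 2 = K ^ 2 / (n:ℝ) ^ 2 := by rw [div_pow]
      have h2' : 2 / (K * (n:ℝ)) = 2 * (1 / (K * (n:ℝ))) := by rw [mul_one_div]
      nlinarith only [hs_lb, hsq, hKn, h2']
    calc u₀ ^ 2 = (m₂ - m₁) ^ 2 * (1 - sᵥ) ^ 2 := by rw [hu₀s]; ring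
    _ ≤ 4 * (1 - 2 / (K * (n:ℝ)) + K ^ 2 / (n:ℝ) ^ 2) :=
      mul_le_mul hm2 h1s (sq_nonneg _) (by norm_num)
  -- bound on e
  have hDabs : |t₁⁻¹ - t₂⁻¹| ≤ 2 / α - 2 / β :=
    abs_le.2 ⟨by linarith [ht₁inv.1, ht₂inv.2], by linarith [ht₁inv.2, ht₂inv.1]⟩
  have h2ab : 2 / β ≤ 2 / α := by
    rw [div_le_div_iff₀ hβ hα]; linarith
  have he_abs : |e| ≤ A * (β - α) * β / (2 * α * (n:ℝ) ^ 2) := by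
    rw [hedef, abs_div, abs_mul, abs_of_pos (mul_pos hT₁pos hT₂pos)]
    have hnum : |b - M - m₁| * |t₁⁻¹ - t₂⁻¹| ≤ A * (2 / α - 2 / β) :=
      mul_le_mul habs₁ hDabs (abs_nonneg _) hApos.le
    have hden : (2 * (n:ℝ) / β) * (2 * (n:ℝ) / β) ≤ T₁ * T₂ :=
      mul_le_mul hT₁lb hT₂lb (by positivity) hT₁pos.le
    calc |b - M - m₁| * |t₁⁻¹ - t₂⁻¹| / (T₁ * T₂)
        ≤ (A * (2 / α - 2 / β)) / ((2 * (n:ℝ) / β) * (2 * (n:ℝ) / β)) :=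
      div_le_div₀ (mul_nonneg hApos.le (by linarith)) hnum (by positivity) hden
    _ = A * (β - α) * β / (2 * α * (n:ℝ) ^ 2) := by field_simp; try ring
  have he2 : e ^ 2 ≤ (A * (β - α) * β / (2 * α * (n:ℝ) ^ 2)) ^ 2 := by
    rw [← sq_abs e]
    exact pow_le_pow_left₀ (abs_nonneg e) he_abs 2
  have hV1 : e ^ 2 * W ≤ A ^ 2 * (K - 1) ^ 2 * K ^ 2 * ((n:ℝ) - 1) / (n:ℝ) ^ 4 := by
    calc e ^ 2 * W ≤ (A * (β - α) * β / (2 * α * (n:ℝ) ^ 2)) ^ 2 * (4 * ((n:ℝ) - 1) / α ^ 2) :=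
      mul_le_mul he2 hWub hWnn (by positivity)
    _ = A ^ 2 * (K - 1) ^ 2 * K ^ 2 * ((n:ℝ) - 1) / (n:ℝ) ^ 4 := by
      rw [hKdef]; field_simp; ring
  -- bound on v₀
  have hc₁abs : |c₁| ≤ A * β / (2 * (n:ℝ)) := by
    rw [hc₁def, abs_div, abs_of_pos hT₁pos]
    calc |b - M - m₁| / T₁ ≤ A / (2 * (n:ℝ) / β) :=
      div_le_div₀ hApos.le habs₁ (by positivity) hT₁lb
    _ = A * β / (2 * (n:ℝ)) := by field_simp; try ring
  have ht₂inv_pos : 0 < t₂⁻¹ := by positivity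
  have hv₀abs : |v₀| ≤ A * (β - α) * (β + α * (n:ℝ)) / (α ^ 2 * (n:ℝ) ^ 2) := by
    rw [hv₀def]
    have h1 : |e * t₂⁻¹| ≤ (A * (β - α) * β / (2 * α * (n:ℝ) ^ 2)) * (2 / α) := by
      rw [abs_mul, abs_of_pos ht₂inv_pos]
      exact mul_le_mul he_abs ht₂inv.2 ht₂inv_pos.le (le_trans (abs_nonneg e) he_abs)
    have h2 : |c₁ * (t₂⁻¹ - t₁⁻¹)| ≤ (A * β / (2 * (n:ℝ))) * (2 / α - 2 / β) := by
      rw [abs_mul]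
      have : |t₂⁻¹ - t₁⁻¹| = |t₁⁻¹ - t₂⁻¹| := abs_sub_comm _ _
      rw [this]
      exact mul_le_mul hc₁abs hDabs (abs_nonneg _) (by positivity)
    calc |e * t₂⁻¹ + c₁ * (t₂⁻¹ - t₁⁻¹)| ≤ |e * t₂⁻¹| + |c₁ * (t₂⁻¹ - t₁⁻¹)| := abs_add_le _ _
    _ ≤ (A * (β - α) * β / (2 * α * (n:ℝ) ^ 2)) * (2 / α)
        + (A * β / (2 * (n:ℝ))) * (2 / α - 2 / β) := by linarith
    _ = A * (β - α) * (β + α * (n:ℝ)) / (α ^ 2 * (n:ℝ) ^ 2) := by field_simp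
  have hV2 : v₀ ^ 2 ≤ A ^ 2 * (K - 1) ^ 2 * (K + (n:ℝ)) ^ 2 / (n:ℝ) ^ 4 := by
    calc v₀ ^ 2 = |v₀| ^ 2 := (sq_abs v₀).symm
    _ ≤ (A * (β - α) * (β + α * (n:ℝ)) / (α ^ 2 * (n:ℝ) ^ 2)) ^ 2 :=
      pow_le_pow_left₀ (abs_nonneg v₀) hv₀abs 2
    _ = A ^ 2 * (K - 1) ^ 2 * (K + (n:ℝ)) ^ 2 / (n:ℝ) ^ 4 := by
      rw [hKdef]; field_simp
  -- final chain
  have hfin1 : 2 * (4 * K ^ 2 * ((n:ℝ) - 1) / (n:ℝ) ^ 2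
      + 4 * (1 - 2 / (K * (n:ℝ)) + K ^ 2 / (n:ℝ) ^ 2))
      = 8 * ((K ^ 3 + K * (n:ℝ) - 2) / (K * (n:ℝ))) := by
    field_simp
    ring
  have hfin2 : 2 * (A ^ 2 * (K - 1) ^ 2 * K ^ 2 * ((n:ℝ) - 1) / (n:ℝ) ^ 4
      + A ^ 2 * (K - 1) ^ 2 * (K + (n:ℝ)) ^ 2 / (n:ℝ) ^ 4)
      ≤ 8 * A ^ 2 * (K - 1) ^ 2 * K ^ 2 * (K ^ 2 * (n:ℝ) ^ 2 + (n:ℝ) - 1) / (n:ℝ) ^ 4 := by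
    have hP : 0 ≤ A ^ 2 * (K - 1) ^ 2 := by positivity
    have hKn1 : 0 ≤ (K - 1) * ((n:ℝ) - 1) := by
      apply mul_nonneg <;> linarith
    have h2Kn : K + (n:ℝ) ≤ 2 * (K * (n:ℝ)) := by nlinarith only [hKn1, hK1, hn2]
    have h1 : (K + (n:ℝ)) ^ 2 ≤ 4 * K ^ 2 * (n:ℝ) ^ 2 := by
      nlinarith only [h2Kn, hK1, hn2]
    have h2 : 4 * K ^ 2 * (n:ℝ) ^ 2 ≤ 4 * K ^ 4 * (n:ℝ) ^ 2 := by
      nlinarith only [mul_nonneg (mul_nonneg (sub_nonneg.2 hK1)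
        (by linarith : (0:ℝ) ≤ K + 1)) (sq_nonneg ((n:ℝ) * K))]
    have hbr : 2 * (K ^ 2 * ((n:ℝ) - 1)) + 2 * (K + (n:ℝ)) ^ 2
        ≤ 8 * K ^ 2 * (K ^ 2 * (n:ℝ) ^ 2 + (n:ℝ) - 1) := by
      nlinarith only [h1, h2, hK1, hn2, sq_nonneg K,
        mul_nonneg (mul_nonneg (sq_nonneg K) hnpos.le) (by linarith : (0:ℝ) ≤ (n:ℝ) - 1)]
    have key : 2 * (A ^ 2 * (K - 1) ^ 2 * K ^ 2 * ((n:ℝ) - 1))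
        + 2 * (A ^ 2 * (K - 1) ^ 2 * (K + (n:ℝ)) ^ 2)
        ≤ 8 * A ^ 2 * (K - 1) ^ 2 * K ^ 2 * (K ^ 2 * (n:ℝ) ^ 2 + (n:ℝ) - 1) := by
      nlinarith only [mul_le_mul_of_nonneg_left hbr hP]
    calc 2 * (A ^ 2 * (K - 1) ^ 2 * K ^ 2 * ((n:ℝ) - 1) / (n:ℝ) ^ 4
        + A ^ 2 * (K - 1) ^ 2 * (K + (n:ℝ)) ^ 2 / (n:ℝ) ^ 4)
        = (2 * (A ^ 2 * (K - 1) ^ 2 * K ^ 2 * ((n:ℝ) - 1))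
          + 2 * (A ^ 2 * (K - 1) ^ 2 * (K + (n:ℝ)) ^ 2)) / (n:ℝ) ^ 4 := by ring
    _ ≤ (8 * A ^ 2 * (K - 1) ^ 2 * K ^ 2 * (K ^ 2 * (n:ℝ) ^ 2 + (n:ℝ) - 1)) / (n:ℝ) ^ 4 :=
      (div_le_div_iff_of_pos_right (by positivity)).2 key
    _ = 8 * A ^ 2 * (K - 1) ^ 2 * K ^ 2 * (K ^ 2 * (n:ℝ) ^ 2 + (n:ℝ) - 1) / (n:ℝ) ^ 4 := by
      ring
  calc ∑ i, (x₂ i - x₁ i) ^ 2 = (a + e) ^ 2 * W + (u₀ + v₀) ^ 2 := by rw [hLHS, hce, hdeq]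
  _ ≤ 2 * (a ^ 2 * W + u₀ ^ 2) + 2 * (e ^ 2 * W + v₀ ^ 2) := by
    nlinarith only [mul_nonneg hWnn (sq_nonneg (a - e)), sq_nonneg (u₀ - v₀), hWnn]
  _ ≤ 2 * (4 * K ^ 2 * ((n:ℝ) - 1) / (n:ℝ) ^ 2
        + 4 * (1 - 2 / (K * (n:ℝ)) + K ^ 2 / (n:ℝ) ^ 2))
      + 2 * (A ^ 2 * (K - 1) ^ 2 * K ^ 2 * ((n:ℝ) - 1) / (n:ℝ) ^ 4
        + A ^ 2 * (K - 1) ^ 2 * (K + (n:ℝ)) ^ 2 / (n:ℝ) ^ 4) := by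
    linarith only [hU1, hU2, hV1, hV2]
  _ ≤ 8 * ((K ^ 3 + K * (n:ℝ) - 2) / (K * (n:ℝ)))
      + 8 * A ^ 2 * (K - 1) ^ 2 * K ^ 2 * (K ^ 2 * (n:ℝ) ^ 2 + (n:ℝ) - 1) / (n:ℝ) ^ 4 := by
    linarith only [hfin1, hfin2]
end
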